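/- Let p, q, r, s be four points of ℙ¹(ℝ)×ℙ¹(ℝ) such that their images under the first projection are pairwise distinct, their images under the second projection are pairwise distinct, and there is no nonzero real bilinear form c₀₀u₀v₀+c₀₁u₀v₁+c₁₀u₁v₀+c₁₁u₁v₁ vanishing at all four points. Then there exist A, B ∈ GL₂(ℝ) and μ₁, μ₂ ∈ ℝ∖{0,1} with μ₁ ≠ μ₂ such that the automorphism (x,y) ↦ (A·x, B·y) of ℙ¹(ℝ)×ℙ¹(ℝ) maps p to ([1:0],[1:0]), q to ([0:1],[0:1]), r to ([1:1],[1:1]) and s to ([1:μ₁],[1:μ₂]). -/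

import Mathlib

noncomputable section

open ComplexConjugate

/-- The projective line `ℙ¹(K)` over a field `K`, i.e. the projectivization of `K²`. -/
abbrev Pone (K : Type) [Field K] : Type := Projectivization K (Fin 2 → K)

theorem vec_ne_zero {K : Type} [Field K] {a b : K} (h : a ≠ 0 ∨ b ≠ 0) :
    (![a, b] : Fin 2 → K) ≠ 0 := by
  intro hv
  rcases h with h | h
  · exact h (by simpa using congrFun hv 0)
  · exact h (by simpa using congrFun hv 1)

/-- The point `[a : b]` of the projective line `ℙ¹(K)`. -/
def pt {K : Type} [Field K] (a b : K) (h : a ≠ 0 ∨ b ≠ 0) : Pone K :=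
  Projectivization.mk K ![a, b] (vec_ne_zero h)

theorem mulVecLin_injective {K : Type} [Field K] (A : GL (Fin 2) K) :
    Function.Injective ⇑(Matrix.mulVecLin (A : Matrix (Fin 2) (Fin 2) K)) := by
  intro v w hvw
  have h1 : (A : Matrix (Fin 2) (Fin 2) K).mulVec v
      = (A : Matrix (Fin 2) (Fin 2) K).mulVec w := hvw
  have h2 : ((↑(A⁻¹) : Matrix (Fin 2) (Fin 2) K) * (A : Matrix (Fin 2) (Fin 2) K)).mulVec v
      = ((↑(A⁻¹) : Matrix (Fin 2) (Fin 2) K) * (A : Matrix (Fin 2) (Fin 2) K)).mulVec w := by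
    rw [← Matrix.mulVec_mulVec, ← Matrix.mulVec_mulVec, h1]
  rw [Units.inv_mul, Matrix.one_mulVec, Matrix.one_mulVec] at h2
  exact h2

/-- The action of `A ∈ GL₂(K)` on the projective line `ℙ¹(K)`: `A·[v] = [A v]`. -/
def glMap {K : Type} [Field K] (A : GL (Fin 2) K) : Pone K → Pone K :=
  Projectivization.map (Matrix.mulVecLin (A : Matrix (Fin 2) (Fin 2) K)) (mulVecLin_injective A)

/-- Four points of `ℙ¹(K) × ℙ¹(K)` are in general position: their images under the first
projection are pairwise distinct, their images under the second projection are pairwise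
distinct, and there is no nonzero bilinear form
`c₀₀u₀v₀ + c₀₁u₀v₁ + c₁₀u₁v₀ + c₁₁u₁v₁` vanishing at all four points (i.e. no curve of
bidegree `(1,1)` through all four points). -/
def GenPos {K : Type} [Field K] (P₁ P₂ P₃ P₄ : Pone K × Pone K) : Prop :=
  [P₁.1, P₂.1, P₃.1, P₄.1].Pairwise (· ≠ ·) ∧
  [P₁.2, P₂.2, P₃.2, P₄.2].Pairwise (· ≠ ·) ∧
  ∀ c₀₀ c₀₁ c₁₀ c₁₁ : K,
    (∀ P ∈ [P₁, P₂, P₃, P₄],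
      c₀₀ * P.1.rep 0 * P.2.rep 0 + c₀₁ * P.1.rep 0 * P.2.rep 1 +
        c₁₀ * P.1.rep 1 * P.2.rep 0 + c₁₁ * P.1.rep 1 * P.2.rep 1 = 0) →
    c₀₀ = 0 ∧ c₀₁ = 0 ∧ c₁₀ = 0 ∧ c₁₁ = 0

/-- The ruling-preserving map `(x, y) ↦ (A·x, B·y)` of `ℙ¹(ℝ) × ℙ¹(ℝ)`. -/
def mapAB (A B : GL (Fin 2) ℝ) (P : Pone ℝ × Pone ℝ) : Pone ℝ × Pone ℝ :=
  (glMap A P.1, glMap B P.2)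


/-!
The first projections are three-transitive on `ℙ¹`, so some `A` sends `p.1, q.1, r.1` to
`[1:0], [0:1], [1:1]`; since `s.1` differs from `q.1`, its image is `[1:μ₁]`, and `μ₁ ≠ 0, 1`
because `s.1` also differs from `p.1` and `r.1`. Likewise for `B` and the second projections.
If `μ₁ = μ₂`, all four image points lie on the diagonal of `ℙ¹ × ℙ¹`, the zero set of
`u₀v₁ - u₁v₀`; pulling this form back along `(A, B)` gives a bilinear form with matrix
`Aᵀ J B` (`J` the standard symplectic matrix), which is nonzero since
`det (Aᵀ J B) = det A det B`, and it vanishes at `p, q, r, s`.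
-/

open Matrix Projectivization

variable {K : Type} [Field K]

def wedge (u v : Fin 2 → K) : K := u 0 * v 1 - u 1 * v 0

theorem mk_eq_mk_iff_wedge_eq_zero {u v : Fin 2 → K} (hu : u ≠ 0) (hv : v ≠ 0) :
    mk K u hu = mk K v hv ↔ wedge u v = 0 := by
  rw [mk_eq_mk_iff' K u v hu hv, wedge]
  constructor
  · rintro ⟨a, rfl⟩
    simp only [Pi.smul_apply, smul_eq_mul]
    ring
  · intro h
    by_cases hv0 : v 0 = 0
    · have hv1 : v 1 ≠ 0 := fun hv1 => hv (funext fun i => by fin_cases i <;> assumption)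
      refine ⟨u 1 / v 1, funext fun i => ?_⟩
      fin_cases i <;>
        simp only [Fin.zero_eta, Fin.mk_one, Pi.smul_apply, smul_eq_mul] <;> field_simp
      simpa [hv0, hv1] using h
    · refine ⟨u 0 / v 0, funext fun i => ?_⟩
      fin_cases i <;>
        simp only [Fin.zero_eta, Fin.mk_one, Pi.smul_apply, smul_eq_mul] <;> field_simp
      linear_combination h

theorem wedge_smul_eq_add (u v w : Fin 2 → K) :
    wedge u v • w = wedge w v • u + wedge u w • v := by
  funext i
  fin_cases i <;> simp [wedge] <;> ring

theorem Matrix.GeneralLinearGroup.mulVec_ne_zero (A : GL (Fin 2) K) {v : Fin 2 → K}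
    (hv : v ≠ 0) : (A : Matrix (Fin 2) (Fin 2) K) *ᵥ v ≠ 0 :=
  fun h => hv (mulVecLin_injective A (by simpa using h))

theorem glMap_mk (A : GL (Fin 2) K) {v : Fin 2 → K} (hv : v ≠ 0) :
    glMap A (mk K v hv) =
      mk K ((A : Matrix (Fin 2) (Fin 2) K) *ᵥ v) (GeneralLinearGroup.mulVec_ne_zero A hv) :=
  rfl

theorem glMap_mk_eq_of_mulVec_eq_smul (A : GL (Fin 2) K) {v w : Fin 2 → K} (hv : v ≠ 0)
    (hw : w ≠ 0) {a : K} (h : (A : Matrix (Fin 2) (Fin 2) K) *ᵥ v = a • w) :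
    glMap A (mk K v hv) = mk K w hw := by
  rw [glMap_mk, mk_eq_mk_iff']
  exact ⟨a, h.symm⟩

theorem glMap_inv_glMap (A : GL (Fin 2) K) (t : Pone K) : glMap A⁻¹ (glMap A t) = t := by
  induction t using Projectivization.ind with
  | h v hv =>
    rw [glMap_mk]
    refine glMap_mk_eq_of_mulVec_eq_smul _ _ _ (a := 1) ?_
    rw [mulVec_mulVec, one_smul, ← Units.val_mul, inv_mul_cancel, Units.val_one, one_mulVec]

theorem glMap_injective (A : GL (Fin 2) K) : Function.Injective (glMap A) :=
  Function.LeftInverse.injective (glMap_inv_glMap A)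

theorem wedge_mulVec_rep_eq_zero_of_glMap_eq (A B : GL (Fin 2) K) {x y : Pone K}
    (h : glMap A x = glMap B y) :
    wedge ((A : Matrix (Fin 2) (Fin 2) K) *ᵥ x.rep) ((B : Matrix (Fin 2) (Fin 2) K) *ᵥ y.rep)
      = 0 := by
  rw [← x.mk_rep, ← y.mk_rep, glMap_mk, glMap_mk] at h
  exact (mk_eq_mk_iff_wedge_eq_zero _ _).1 h

theorem exists_glMap_eq_pt {x y z : Pone K} (hxy : x ≠ y) (hxz : x ≠ z) (hyz : y ≠ z) :
    ∃ A : GL (Fin 2) K,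
      glMap A x = pt 1 0 (Or.inl one_ne_zero) ∧
      glMap A y = pt 0 1 (Or.inr one_ne_zero) ∧
      glMap A z = pt 1 1 (Or.inl one_ne_zero) := by
  induction x using Projectivization.ind with | h u hu => ?_
  induction y using Projectivization.ind with | h v hv => ?_
  induction z using Projectivization.ind with | h w hw => ?_
  have huv : wedge u v ≠ 0 := (mk_eq_mk_iff_wedge_eq_zero hu hv).not.1 hxy
  have hwv : wedge w v ≠ 0 := (mk_eq_mk_iff_wedge_eq_zero hw hv).not.1 hyz.symm
  have huw : wedge u w ≠ 0 := (mk_eq_mk_iff_wedge_eq_zero hu hw).not.1 hxz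
  -- Cramer's rule: `w = α u + β v`.
  set α := wedge w v / wedge u v
  set β := wedge u w / wedge u v
  have hcramer : α • u + β • v = w := by
    simpa [α, β, div_eq_inv_mul, mul_smul, ← smul_add, inv_smul_smul₀ huv] using
      congrArg ((wedge u v)⁻¹ • ·) (wedge_smul_eq_add u v w).symm
  set M : Matrix (Fin 2) (Fin 2) K := !![α * u 0, β * v 0; α * u 1, β * v 1]
  have hM : M.det ≠ 0 := by
    have : M.det = α * β * wedge u v := by simp only [M, det_fin_two_of, wedge]; ring
    rw [this]
    exact mul_ne_zero (mul_ne_zero (div_ne_zero hwv huv) (div_ne_zero huw huv)) huv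
  set G := GeneralLinearGroup.mkOfDetNeZero M hM
  have inv_eq {e t : Pone K} (h : glMap G e = t) : glMap G⁻¹ t = e := by
    rw [← h, glMap_inv_glMap]
  refine ⟨G⁻¹, inv_eq (glMap_mk_eq_of_mulVec_eq_smul _ _ _ (a := α) ?_),
    inv_eq (glMap_mk_eq_of_mulVec_eq_smul _ _ _ (a := β) ?_),
    inv_eq (glMap_mk_eq_of_mulVec_eq_smul _ _ _ (a := 1) ?_)⟩
  all_goals
    funext i
    fin_cases i <;> simp [G, M, ← hcramer]

theorem exists_eq_pt_one_of_ne {t : Pone K} (h : t ≠ pt 0 1 (Or.inr one_ne_zero)) :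
    ∃ μ : K, t = pt 1 μ (Or.inl one_ne_zero) := by
  have h0 : t.rep 0 ≠ 0 := by
    rw [← t.mk_rep, pt, Ne, mk_eq_mk_iff_wedge_eq_zero] at h
    simpa [wedge] using h
  refine ⟨t.rep 1 / t.rep 0, ?_⟩
  rw [← t.mk_rep, pt, mk_eq_mk_iff_wedge_eq_zero]
  simp only [wedge, mk_rep, cons_val_one, cons_val_fin_one, cons_val_zero, mul_one]
  field_simp
  ring

theorem exists_glMap_normalForm {x y z t : Pone K} (h : [x, y, z, t].Pairwise (· ≠ ·)) :
    ∃ (A : GL (Fin 2) K) (μ : K), μ ≠ 0 ∧ μ ≠ 1 ∧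
      glMap A x = pt 1 0 (Or.inl one_ne_zero) ∧
      glMap A y = pt 0 1 (Or.inr one_ne_zero) ∧
      glMap A z = pt 1 1 (Or.inl one_ne_zero) ∧
      glMap A t = pt 1 μ (Or.inl one_ne_zero) := by
  simp only [List.pairwise_cons, List.mem_cons, List.not_mem_nil, or_false,
    List.Pairwise.nil, and_true, forall_eq_or_imp, forall_eq] at h
  obtain ⟨⟨hxy, hxz, hxt⟩, ⟨hyz, hyt⟩, hzt, -⟩ := h
  obtain ⟨A, hx, hy, hz⟩ := exists_glMap_eq_pt hxy hxz hyz
  obtain ⟨μ, hμ⟩ := exists_eq_pt_one_of_ne (hy ▸ (glMap_injective A).ne hyt.symm)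
  refine ⟨A, μ, ?_, ?_, hx, hy, hz, hμ⟩
  · rintro rfl
    exact hxt (glMap_injective A (hx.trans hμ.symm))
  · rintro rfl
    exact hzt (glMap_injective A (hz.trans hμ.symm))

theorem bilinear_eq_wedge_mulVec (A B : Matrix (Fin 2) (Fin 2) K) (u v : Fin 2 → K) :
    let C := Aᵀ * !![0, 1; -1, 0] * B
    C 0 0 * u 0 * v 0 + C 0 1 * u 0 * v 1 + C 1 0 * u 1 * v 0 + C 1 1 * u 1 * v 1
      = wedge (A *ᵥ u) (B *ᵥ v) := by
  simp [wedge, mul_apply, mulVec, dotProduct, Fin.sum_univ_two]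
  ring

theorem not_genPos_of_glMap_eq (A B : GL (Fin 2) K) {p q r s : Pone K × Pone K}
    (h : ∀ P ∈ [p, q, r, s], glMap A P.1 = glMap B P.2) : ¬ GenPos p q r s := by
  intro hgen
  set C := (A : Matrix (Fin 2) (Fin 2) K)ᵀ * !![0, 1; -1, 0] * (B : Matrix (Fin 2) (Fin 2) K)
  obtain ⟨h00, h01, h10, h11⟩ := hgen.2.2 (C 0 0) (C 0 1) (C 1 0) (C 1 1) fun P hP => by
    rw [bilinear_eq_wedge_mulVec]
    exact wedge_mulVec_rep_eq_zero_of_glMap_eq A B (h P hP)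
  have hC : C.det ≠ 0 := by
    simp only [C, det_mul, det_transpose, det_fin_two_of]
    simpa using ⟨A.det_ne_zero, B.det_ne_zero⟩
  exact hC (by rw [det_fin_two, h00, h01, h10, h11]; ring)

/-- Let `p, q, r, s` be four points of `ℙ¹(ℝ) × ℙ¹(ℝ)` whose first
projections are pairwise distinct, whose second projections are pairwise distinct, and such
that no nonzero real bilinear form `c₀₀u₀v₀ + c₀₁u₀v₁ + c₁₀u₁v₀ + c₁₁u₁v₁` vanishes at all
four points. Then there are `A, B ∈ GL₂(ℝ)` and `μ₁, μ₂ ∈ ℝ ∖ {0,1}` with `μ₁ ≠ μ₂` such that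
`(x, y) ↦ (A·x, B·y)` maps `p` to `([1:0],[1:0])`, `q` to `([0:1],[0:1])`, `r` to
`([1:1],[1:1])` and `s` to `([1:μ₁],[1:μ₂])`. -/
theorem statement4 (p q r s : Pone ℝ × Pone ℝ) (hgen : GenPos p q r s) :
    ∃ (A B : GL (Fin 2) ℝ) (μ₁ μ₂ : ℝ),
      μ₁ ≠ 0 ∧ μ₁ ≠ 1 ∧ μ₂ ≠ 0 ∧ μ₂ ≠ 1 ∧ μ₁ ≠ μ₂ ∧
      mapAB A B p = (pt 1 0 (Or.inl one_ne_zero), pt 1 0 (Or.inl one_ne_zero)) ∧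
      mapAB A B q = (pt 0 1 (Or.inr one_ne_zero), pt 0 1 (Or.inr one_ne_zero)) ∧
      mapAB A B r = (pt 1 1 (Or.inl one_ne_zero), pt 1 1 (Or.inl one_ne_zero)) ∧
      mapAB A B s = (pt 1 μ₁ (Or.inl one_ne_zero), pt 1 μ₂ (Or.inl one_ne_zero)) := by
  obtain ⟨A, μ₁, hμ₁0, hμ₁1, hAp, hAq, hAr, hAs⟩ := exists_glMap_normalForm hgen.1
  obtain ⟨B, μ₂, hμ₂0, hμ₂1, hBp, hBq, hBr, hBs⟩ := exists_glMap_normalForm hgen.2.1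
  refine ⟨A, B, μ₁, μ₂, hμ₁0, hμ₁1, hμ₂0, hμ₂1, ?_, Prod.ext hAp hBp, Prod.ext hAq hBq,
    Prod.ext hAr hBr, Prod.ext hAs hBs⟩
  rintro rfl
  refine not_genPos_of_glMap_eq A B (fun P hP => ?_) hgen
  simp only [List.mem_cons, List.not_mem_nil, or_false] at hP
  rcases hP with rfl | rfl | rfl | rfl
  exacts [hAp.trans hBp.symm, hAq.trans hBq.symm, hAr.trans hBr.symm, hAs.trans hBs.symm]
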